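/- Let p ∈ [1,∞) and let (μ_k)_{k∈ℕ} be a sequence in P_p(ℝ^{d+1}) that is Cauchy with respect to the Time-integrated Optimal Transport distance D_p. Then the family {μ_k : k ∈ ℕ} is tight, i.e. for every ε > 0 there is a compact set K ⊂ ℝ^{d+1} with μ_k(K) ≥ 1 − ε for all k. -/
import Mathlib


open MeasureTheory Filter Topology

noncomputable section

/-- The space `ℝ^{d+1} = ℝ^d × ℝ`, with last coordinate representing time. -/
abbrev Zsp (d : ℕ) : Type := (Fin d → ℝ) × ℝ

/-- The pseudometric `d_{p,w}((x,t),(y,s)) = (w‖x−y‖_p^p + (1−w)|t−s|^p)^{1/p}`. -/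
def dpw {d : ℕ} (p w : ℝ) (z z' : Zsp d) : ℝ :=
  (w * (∑ i, |z.1 i - z'.1 i| ^ p) + (1 - w) * |z.2 - z'.2| ^ p) ^ (1 / p)

/-- The metric `d_p((x,t),(y,s)) = (‖x−y‖_p^p + |t−s|^p)^{1/p}`. -/
def dPmet {d : ℕ} (p : ℝ) (z z' : Zsp d) : ℝ :=
  ((∑ i, |z.1 i - z'.1 i| ^ p) + |z.2 - z'.2| ^ p) ^ (1 / p)

/-- `μ ∈ P_p(ℝ^{d+1})`: a Borel probability measure with finite `p`-th moment w.r.t. `d_p`. -/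
def MemPp {d : ℕ} (p : ℝ) (μ : Measure (Zsp d)) : Prop :=
  IsProbabilityMeasure μ ∧ ∀ z0 : Zsp d, Integrable (fun z => dPmet p z0 z ^ p) μ

/-- `π ∈ Π(α,β)`: a coupling of `α` and `β`. -/
def IsCoupling {d : ℕ} (π : Measure (Zsp d × Zsp d)) (α β : Measure (Zsp d)) : Prop :=
  IsProbabilityMeasure π ∧ π.map Prod.fst = α ∧ π.map Prod.snd = β

/-- `W_{p,w}(α,β) = (inf_{π ∈ Π(α,β)} ∫ d_{p,w}(z,z')^p dπ)^{1/p}`. -/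
def Wpw {d : ℕ} (p w : ℝ) (α β : Measure (Zsp d)) : ℝ :=
  sInf {r : ℝ | ∃ π : Measure (Zsp d × Zsp d), IsCoupling π α β ∧
    r = ∫ z, dpw p w z.1 z.2 ^ p ∂π} ^ (1 / p)

/-- `W_p(α,β)`: the `p`-Wasserstein distance w.r.t. `d_p`. -/
def Wp {d : ℕ} (p : ℝ) (α β : Measure (Zsp d)) : ℝ :=
  sInf {r : ℝ | ∃ π : Measure (Zsp d × Zsp d), IsCoupling π α β ∧
    r = ∫ z, dPmet p z.1 z.2 ^ p ∂π} ^ (1 / p)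

/-- The Time-integrated Optimal Transport distance `D_p(α,β) = sup_{w ∈ [0,1]} W_{p,w}(α,β)`. -/
def Dp {d : ℕ} (p : ℝ) (α β : Measure (Zsp d)) : ℝ :=
  sSup {r : ℝ | ∃ w ∈ Set.Icc (0 : ℝ) 1, r = Wpw p w α β}

/-- Weak convergence in `P_p(ℝ^{d+1})`. -/
def WeakConvPp {d : ℕ} (p : ℝ) (μs : ℕ → Measure (Zsp d)) (μ : Measure (Zsp d)) : Prop :=
  (∀ φ : BoundedContinuousFunction (Zsp d) ℝ,
      Tendsto (fun k => ∫ z, φ z ∂(μs k)) atTop (𝓝 (∫ z, φ z ∂μ))) ∧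
  (∀ z0 : Zsp d,
      Tendsto (fun k => ∫ z, dPmet p z0 z ^ p ∂(μs k)) atTop
        (𝓝 (∫ z, dPmet p z0 z ^ p ∂μ)))


/-! ### Auxiliary lemmas -/

section Aux

variable {d : ℕ}

lemma sumRpow_nonneg (p : ℝ) (z z' : Zsp d) :
    0 ≤ (∑ i, |z.1 i - z'.1 i| ^ p) + |z.2 - z'.2| ^ p := by
  have h1 : 0 ≤ ∑ i, |z.1 i - z'.1 i| ^ p :=
    Finset.sum_nonneg fun i _ => Real.rpow_nonneg (abs_nonneg _) _
  have h2 : 0 ≤ |z.2 - z'.2| ^ p := Real.rpow_nonneg (abs_nonneg _) _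
  linarith

lemma dPmet_nonneg (p : ℝ) (z z' : Zsp d) : 0 ≤ dPmet p z z' :=
  Real.rpow_nonneg (sumRpow_nonneg p z z') _

lemma dPmet_rpow {p : ℝ} (hp : 0 < p) (z z' : Zsp d) :
    dPmet p z z' ^ p = (∑ i, |z.1 i - z'.1 i| ^ p) + |z.2 - z'.2| ^ p := by
  rw [dPmet, ← Real.rpow_mul (sumRpow_nonneg p z z'), one_div, inv_mul_cancel₀ hp.ne',
    Real.rpow_one]

lemma dPmet_rpow_symm {p : ℝ} (hp : 0 < p) (z z' : Zsp d) :
    dPmet p z z' ^ p = dPmet p z' z ^ p := by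
  rw [dPmet_rpow hp, dPmet_rpow hp, abs_sub_comm z.2 z'.2]
  congr 1
  exact Finset.sum_congr rfl fun i _ => by rw [abs_sub_comm]

lemma dpw_base_nonneg {p w : ℝ} (hw : 0 ≤ w) (hw1 : w ≤ 1) (z z' : Zsp d) :
    0 ≤ w * (∑ i, |z.1 i - z'.1 i| ^ p) + (1 - w) * |z.2 - z'.2| ^ p := by
  have h1 : 0 ≤ ∑ i, |z.1 i - z'.1 i| ^ p :=
    Finset.sum_nonneg fun i _ => Real.rpow_nonneg (abs_nonneg _) _
  have h2 : 0 ≤ |z.2 - z'.2| ^ p := Real.rpow_nonneg (abs_nonneg _) _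
  have := mul_nonneg hw h1
  have := mul_nonneg (by linarith : (0:ℝ) ≤ 1 - w) h2
  linarith

lemma dpw_nonneg {p w : ℝ} (hw : 0 ≤ w) (hw1 : w ≤ 1) (z z' : Zsp d) :
    0 ≤ dpw p w z z' :=
  Real.rpow_nonneg (dpw_base_nonneg hw hw1 z z') _

lemma dpw_rpow {p w : ℝ} (hp : 0 < p) (hw : 0 ≤ w) (hw1 : w ≤ 1) (z z' : Zsp d) :
    dpw p w z z' ^ p
      = w * (∑ i, |z.1 i - z'.1 i| ^ p) + (1 - w) * |z.2 - z'.2| ^ p := by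
  rw [dpw, ← Real.rpow_mul (dpw_base_nonneg hw hw1 z z'), one_div,
    inv_mul_cancel₀ hp.ne', Real.rpow_one]

lemma dpw_rpow_le_dPmet_rpow {p w : ℝ} (hp : 0 < p) (hw : 0 ≤ w) (hw1 : w ≤ 1)
    (z z' : Zsp d) : dpw p w z z' ^ p ≤ dPmet p z z' ^ p := by
  rw [dpw_rpow hp hw hw1, dPmet_rpow hp]
  have h1 : 0 ≤ ∑ i, |z.1 i - z'.1 i| ^ p :=
    Finset.sum_nonneg fun i _ => Real.rpow_nonneg (abs_nonneg _) _
  have h2 : 0 ≤ |z.2 - z'.2| ^ p := Real.rpow_nonneg (abs_nonneg _) _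
  nlinarith

lemma two_pow_helper {p : ℝ} (hp : 1 ≤ p) {a b : ℝ} (ha : 0 ≤ a) (hb : 0 ≤ b) :
    (a + b) ^ p ≤ 2 ^ (p - 1) * (a ^ p + b ^ p) := by
  lift a to NNReal using ha
  lift b to NNReal using hb
  exact_mod_cast NNReal.rpow_add_le_mul_rpow_add_rpow a b hp

lemma dPmet_rpow_triangle {p : ℝ} (hp : 1 ≤ p) (a b c : Zsp d) :
    dPmet p a c ^ p ≤ 2 ^ (p - 1) * (dPmet p a b ^ p + dPmet p b c ^ p) := by
  have hp0 : (0:ℝ) < p := lt_of_lt_of_le one_pos hp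
  have key : ∀ x y z : ℝ, |x - z| ^ p ≤ 2 ^ (p - 1) * (|x - y| ^ p + |y - z| ^ p) := by
    intro x y z
    have h1 : |x - z| ≤ |x - y| + |y - z| := abs_sub_le x y z
    have h2 : |x - z| ^ p ≤ (|x - y| + |y - z|) ^ p :=
      Real.rpow_le_rpow (abs_nonneg _) h1 hp0.le
    exact h2.trans (two_pow_helper hp (abs_nonneg _) (abs_nonneg _))
  rw [dPmet_rpow hp0, dPmet_rpow hp0, dPmet_rpow hp0]
  have hsum : ∑ i, |a.1 i - c.1 i| ^ p
      ≤ ∑ i, 2 ^ (p - 1) * (|a.1 i - b.1 i| ^ p + |b.1 i - c.1 i| ^ p) :=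
    Finset.sum_le_sum fun i _ => key _ _ _
  have hdistrib : ∑ i, 2 ^ (p - 1) * (|a.1 i - b.1 i| ^ p + |b.1 i - c.1 i| ^ p)
      = 2 ^ (p - 1) * ((∑ i, |a.1 i - b.1 i| ^ p) + ∑ i, |b.1 i - c.1 i| ^ p) := by
    rw [← Finset.mul_sum, Finset.sum_add_distrib]
  have hlast := key a.2 b.2 c.2
  calc (∑ i, |a.1 i - c.1 i| ^ p) + |a.2 - c.2| ^ p
      ≤ 2 ^ (p - 1) * ((∑ i, |a.1 i - b.1 i| ^ p) + ∑ i, |b.1 i - c.1 i| ^ p)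
        + 2 ^ (p - 1) * (|a.2 - b.2| ^ p + |b.2 - c.2| ^ p) :=
        add_le_add (hsum.trans_eq hdistrib) hlast
    _ = 2 ^ (p - 1) * (((∑ i, |a.1 i - b.1 i| ^ p) + |a.2 - b.2| ^ p)
        + ((∑ i, |b.1 i - c.1 i| ^ p) + |b.2 - c.2| ^ p)) := by ring

lemma continuous_dPmet_rpow_pair (p : ℝ) (hp : 0 < p) :
    Continuous fun q : Zsp d × Zsp d => dPmet p q.1 q.2 ^ p := by
  have : (fun q : Zsp d × Zsp d => dPmet p q.1 q.2 ^ p)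
      = fun q : Zsp d × Zsp d =>
          (∑ i, |q.1.1 i - q.2.1 i| ^ p) + |q.1.2 - q.2.2| ^ p :=
    funext fun q => dPmet_rpow hp _ _
  rw [this]
  have c1 : ∀ i : Fin d, Continuous fun q : Zsp d × Zsp d => |q.1.1 i - q.2.1 i| ^ p := by
    intro i
    have : Continuous fun q : Zsp d × Zsp d => |q.1.1 i - q.2.1 i| := by fun_prop
    exact this.rpow_const fun _ => Or.inr hp.le
  have c2 : Continuous fun q : Zsp d × Zsp d => |q.1.2 - q.2.2| ^ p := by
    have : Continuous fun q : Zsp d × Zsp d => |q.1.2 - q.2.2| := by fun_prop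
    exact this.rpow_const fun _ => Or.inr hp.le
  exact (continuous_finset_sum _ fun i _ => c1 i).add c2

lemma continuous_dPmet_rpow_left (p : ℝ) (hp : 0 < p) (z0 : Zsp d) :
    Continuous fun z : Zsp d => dPmet p z0 z ^ p := by
  have heq : (fun z : Zsp d => dPmet p z0 z ^ p)
      = fun z : Zsp d => (∑ i, |z0.1 i - z.1 i| ^ p) + |z0.2 - z.2| ^ p :=
    funext fun z => dPmet_rpow hp _ _
  rw [heq]
  have c1 : ∀ i : Fin d, Continuous fun z : Zsp d => |z0.1 i - z.1 i| ^ p := by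
    intro i
    have : Continuous fun z : Zsp d => |z0.1 i - z.1 i| := by fun_prop
    exact this.rpow_const fun _ => Or.inr hp.le
  have c2 : Continuous fun z : Zsp d => |z0.2 - z.2| ^ p := by
    have : Continuous fun z : Zsp d => |z0.2 - z.2| := by fun_prop
    exact this.rpow_const fun _ => Or.inr hp.le
  exact (continuous_finset_sum _ fun i _ => c1 i).add c2

lemma continuous_dpw_rpow_pair (p w : ℝ) (hp : 0 < p) (hw : 0 ≤ w) (hw1 : w ≤ 1) :
    Continuous fun q : Zsp d × Zsp d => dpw p w q.1 q.2 ^ p := by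
  have : (fun q : Zsp d × Zsp d => dpw p w q.1 q.2 ^ p)
      = fun q : Zsp d × Zsp d =>
          w * (∑ i, |q.1.1 i - q.2.1 i| ^ p) + (1 - w) * |q.1.2 - q.2.2| ^ p :=
    funext fun q => dpw_rpow hp hw hw1 _ _
  rw [this]
  have c1 : ∀ i : Fin d, Continuous fun q : Zsp d × Zsp d => |q.1.1 i - q.2.1 i| ^ p := by
    intro i
    have : Continuous fun q : Zsp d × Zsp d => |q.1.1 i - q.2.1 i| := by fun_prop
    exact this.rpow_const fun _ => Or.inr hp.le
  have c2 : Continuous fun q : Zsp d × Zsp d => |q.1.2 - q.2.2| ^ p := by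
    have : Continuous fun q : Zsp d × Zsp d => |q.1.2 - q.2.2| := by fun_prop
    exact this.rpow_const fun _ => Or.inr hp.le
  exact (continuous_const.mul (continuous_finset_sum _ fun i _ => c1 i)).add
    (continuous_const.mul c2)

lemma isCoupling_prod {α β : Measure (Zsp d)} (hα : IsProbabilityMeasure α)
    (hβ : IsProbabilityMeasure β) : IsCoupling (α.prod β) α β := by
  haveI := hα; haveI := hβ
  refine ⟨inferInstance, ?_, ?_⟩
  · rw [MeasureTheory.Measure.map_fst_prod]; simp
  · rw [MeasureTheory.Measure.map_snd_prod]; simp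

lemma integrable_comp_fst {α β : Measure (Zsp d)} {π : Measure (Zsp d × Zsp d)}
    {f : Zsp d → ℝ} (hf : Integrable f α) (hfm : Measurable f)
    (hπ : IsCoupling π α β) : Integrable (fun q : Zsp d × Zsp d => f q.1) π := by
  have h : Integrable f (π.map Prod.fst) := by rw [hπ.2.1]; exact hf
  exact (integrable_map_measure hfm.aestronglyMeasurable
    measurable_fst.aemeasurable).mp h

lemma integrable_comp_snd {α β : Measure (Zsp d)} {π : Measure (Zsp d × Zsp d)}
    {f : Zsp d → ℝ} (hf : Integrable f β) (hfm : Measurable f)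
    (hπ : IsCoupling π α β) : Integrable (fun q : Zsp d × Zsp d => f q.2) π := by
  have h : Integrable f (π.map Prod.snd) := by rw [hπ.2.2]; exact hf
  exact (integrable_map_measure hfm.aestronglyMeasurable
    measurable_snd.aemeasurable).mp h

lemma integral_comp_fst {α β : Measure (Zsp d)} {π : Measure (Zsp d × Zsp d)}
    {f : Zsp d → ℝ} (hfm : Measurable f) (hπ : IsCoupling π α β) :
    ∫ z, f z ∂α = ∫ q, f q.1 ∂π := by
  rw [← hπ.2.1, integral_map measurable_fst.aemeasurable hfm.aestronglyMeasurable]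

lemma integral_comp_snd {α β : Measure (Zsp d)} {π : Measure (Zsp d × Zsp d)}
    {f : Zsp d → ℝ} (hfm : Measurable f) (hπ : IsCoupling π α β) :
    ∫ z, f z ∂β = ∫ q, f q.2 ∂π := by
  rw [← hπ.2.2, integral_map measurable_snd.aemeasurable hfm.aestronglyMeasurable]

lemma integrable_dPmet_pair {p : ℝ} (hp : 1 ≤ p) {α β : Measure (Zsp d)}
    (hα : MemPp p α) (hβ : MemPp p β) {π : Measure (Zsp d × Zsp d)}
    (hπ : IsCoupling π α β) :
    Integrable (fun q : Zsp d × Zsp d => dPmet p q.1 q.2 ^ p) π := by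
  have hp0 : (0:ℝ) < p := lt_of_lt_of_le one_pos hp
  have h1 : Integrable (fun q : Zsp d × Zsp d => dPmet p 0 q.1 ^ p) π :=
    integrable_comp_fst (hα.2 0) (continuous_dPmet_rpow_left p hp0 0).measurable hπ
  have h2 : Integrable (fun q : Zsp d × Zsp d => dPmet p 0 q.2 ^ p) π :=
    integrable_comp_snd (hβ.2 0) (continuous_dPmet_rpow_left p hp0 0).measurable hπ
  refine ((h1.add h2).const_mul (2 ^ (p - 1))).mono'
    ((continuous_dPmet_rpow_pair p hp0).aestronglyMeasurable) ?_
  filter_upwards with q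
  rw [Real.norm_eq_abs, abs_of_nonneg (Real.rpow_nonneg (dPmet_nonneg _ _ _) _)]
  have htri := dPmet_rpow_triangle hp q.1 (0 : Zsp d) q.2
  have hsymm : dPmet p q.1 (0 : Zsp d) ^ p = dPmet p 0 q.1 ^ p := dPmet_rpow_symm hp0 _ _
  calc dPmet p q.1 q.2 ^ p
      ≤ 2 ^ (p - 1) * (dPmet p q.1 0 ^ p + dPmet p 0 q.2 ^ p) := htri
    _ = 2 ^ (p - 1) * (dPmet p 0 q.1 ^ p + dPmet p 0 q.2 ^ p) := by rw [hsymm]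

lemma mem_S_nonneg {p w : ℝ} (hw : 0 ≤ w) (hw1 : w ≤ 1) {α β : Measure (Zsp d)}
    {r : ℝ} (hr : ∃ π : Measure (Zsp d × Zsp d), IsCoupling π α β ∧
      r = ∫ z, dpw p w z.1 z.2 ^ p ∂π) : 0 ≤ r := by
  obtain ⟨π, -, rfl⟩ := hr
  exact integral_nonneg fun q => Real.rpow_nonneg (dpw_nonneg hw hw1 _ _) _

lemma Wpw_le_bound {p w : ℝ} (hp : 1 ≤ p) (hw : 0 ≤ w) (hw1 : w ≤ 1)
    {α β : Measure (Zsp d)} (hα : MemPp p α) (hβ : MemPp p β) :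
    Wpw p w α β ≤ (∫ q, dPmet p q.1 q.2 ^ p ∂(α.prod β)) ^ (1 / p) := by
  have hp0 : (0:ℝ) < p := lt_of_lt_of_le one_pos hp
  have hcoup : IsCoupling (α.prod β) α β := isCoupling_prod hα.1 hβ.1
  have hint : Integrable (fun q : Zsp d × Zsp d => dPmet p q.1 q.2 ^ p) (α.prod β) :=
    integrable_dPmet_pair hp hα hβ hcoup
  have hmem : (∫ q : Zsp d × Zsp d, dpw p w q.1 q.2 ^ p ∂(α.prod β)) ∈
      {r : ℝ | ∃ π : Measure (Zsp d × Zsp d), IsCoupling π α β ∧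
        r = ∫ z, dpw p w z.1 z.2 ^ p ∂π} := ⟨α.prod β, hcoup, rfl⟩
  have hle : (∫ q : Zsp d × Zsp d, dpw p w q.1 q.2 ^ p ∂(α.prod β))
      ≤ ∫ q, dPmet p q.1 q.2 ^ p ∂(α.prod β) := by
    refine integral_mono_of_nonneg (ae_of_all _ fun q =>
      Real.rpow_nonneg (dpw_nonneg hw hw1 _ _) _) hint (ae_of_all _ fun q =>
      dpw_rpow_le_dPmet_rpow hp0 hw hw1 _ _)
  have hInf_nonneg : 0 ≤ sInf {r : ℝ | ∃ π : Measure (Zsp d × Zsp d),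
      IsCoupling π α β ∧ r = ∫ z, dpw p w z.1 z.2 ^ p ∂π} :=
    Real.sInf_nonneg fun r hr => mem_S_nonneg hw hw1 hr
  have hInf_le : sInf {r : ℝ | ∃ π : Measure (Zsp d × Zsp d),
      IsCoupling π α β ∧ r = ∫ z, dpw p w z.1 z.2 ^ p ∂π}
      ≤ ∫ q, dPmet p q.1 q.2 ^ p ∂(α.prod β) :=
    csInf_le_of_le ⟨0, fun r hr => mem_S_nonneg hw hw1 hr⟩ hmem hle
  exact Real.rpow_le_rpow hInf_nonneg hInf_le (by positivity)

lemma Wpw_le_Dp {p : ℝ} (hp : 1 ≤ p) {w : ℝ} (hw : 0 ≤ w) (hw1 : w ≤ 1)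
    {α β : Measure (Zsp d)} (hα : MemPp p α) (hβ : MemPp p β) :
    Wpw p w α β ≤ Dp p α β := by
  apply le_csSup
  · refine ⟨(∫ q, dPmet p q.1 q.2 ^ p ∂(α.prod β)) ^ (1 / p), ?_⟩
    rintro r ⟨w', hw', rfl⟩
    exact Wpw_le_bound hp hw'.1 hw'.2 hα hβ
  · exact ⟨w, ⟨hw, hw1⟩, rfl⟩

/-- Key moment comparison lemma. -/
lemma moment_bound {p : ℝ} (hp : 1 ≤ p) {α β : Measure (Zsp d)}
    (hα : MemPp p α) (hβ : MemPp p β) (hD : Dp p α β < 1) :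
    ∫ z, dPmet p 0 z ^ p ∂α
      ≤ 2 ^ (p - 1) * ((∫ z, dPmet p 0 z ^ p ∂β) + 4) := by
  have hp0 : (0:ℝ) < p := lt_of_lt_of_le one_pos hp
  have hw : (0:ℝ) ≤ 1/2 := by norm_num
  have hw1 : (1:ℝ)/2 ≤ 1 := by norm_num
  set S : Set ℝ := {r : ℝ | ∃ π : Measure (Zsp d × Zsp d), IsCoupling π α β ∧
    r = ∫ z, dpw p (1/2) z.1 z.2 ^ p ∂π} with hSdef
  have hSne : S.Nonempty :=
    ⟨_, α.prod β, isCoupling_prod hα.1 hβ.1, rfl⟩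
  have hSnn : ∀ r ∈ S, (0:ℝ) ≤ r := fun r hr => mem_S_nonneg hw hw1 hr
  have hInf_nonneg : 0 ≤ sInf S := Real.sInf_nonneg hSnn
  have hW0 : 0 ≤ Wpw p (1/2) α β := by
    rw [Wpw]; exact Real.rpow_nonneg hInf_nonneg _
  have hWlt : Wpw p (1/2) α β < 1 :=
    lt_of_le_of_lt (Wpw_le_Dp hp hw hw1 hα hβ) hD
  have hInf_lt : sInf S < 1 := by
    have h1 : (Wpw p (1/2) α β) ^ p < 1 := Real.rpow_lt_one hW0 hWlt hp0
    have h2 : (Wpw p (1/2) α β) ^ p = sInf S := by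
      rw [Wpw, ← Real.rpow_mul hInf_nonneg, one_div, inv_mul_cancel₀ hp0.ne',
        Real.rpow_one]
    linarith [h2 ▸ h1]
  obtain ⟨r, hrS, hrlt⟩ := exists_lt_of_csInf_lt hSne hInf_lt
  obtain ⟨π, hπ, hr⟩ := hrS
  have hr0 : 0 ≤ r := hSnn r ⟨π, hπ, hr⟩
  have hint : Integrable (fun q : Zsp d × Zsp d => dPmet p q.1 q.2 ^ p) π :=
    integrable_dPmet_pair hp hα hβ hπ
  have hval : ∫ q : Zsp d × Zsp d, dPmet p q.1 q.2 ^ p ∂π = 2 * r := by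
    rw [hr, ← integral_const_mul]
    refine integral_congr_ae (ae_of_all _ fun q => ?_)
    show dPmet p q.1 q.2 ^ p = 2 * dpw p (1/2) q.1 q.2 ^ p
    rw [dPmet_rpow hp0, dpw_rpow hp0 hw hw1]
    ring
  have hval2 : ∫ q : Zsp d × Zsp d, dPmet p q.1 q.2 ^ p ∂π ≤ 2 := by
    rw [hval]; linarith
  have e1 : ∫ z, dPmet p 0 z ^ p ∂α = ∫ q : Zsp d × Zsp d, dPmet p 0 q.1 ^ p ∂π :=
    integral_comp_fst (continuous_dPmet_rpow_left p hp0 0).measurable hπ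
  have e2 : ∫ z, dPmet p 0 z ^ p ∂β = ∫ q : Zsp d × Zsp d, dPmet p 0 q.2 ^ p ∂π :=
    integral_comp_snd (continuous_dPmet_rpow_left p hp0 0).measurable hπ
  have i2 : Integrable (fun q : Zsp d × Zsp d => dPmet p 0 q.2 ^ p) π :=
    integrable_comp_snd (hβ.2 0) (continuous_dPmet_rpow_left p hp0 0).measurable hπ
  have key : ∫ q : Zsp d × Zsp d, dPmet p 0 q.1 ^ p ∂π
      ≤ ∫ q : Zsp d × Zsp d,
          2 ^ (p - 1) * (dPmet p 0 q.2 ^ p + dPmet p q.1 q.2 ^ p) ∂π := by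
    refine integral_mono_of_nonneg (ae_of_all _ fun q =>
      Real.rpow_nonneg (dPmet_nonneg _ _ _) _) ((i2.add hint).const_mul _)
      (ae_of_all _ fun q => ?_)
    have htri := dPmet_rpow_triangle hp (0 : Zsp d) q.2 q.1
    have hsymm : dPmet p q.2 q.1 ^ p = dPmet p q.1 q.2 ^ p := dPmet_rpow_symm hp0 _ _
    calc dPmet p 0 q.1 ^ p
        ≤ 2 ^ (p - 1) * (dPmet p 0 q.2 ^ p + dPmet p q.2 q.1 ^ p) := htri
      _ = 2 ^ (p - 1) * (dPmet p 0 q.2 ^ p + dPmet p q.1 q.2 ^ p) := by rw [hsymm]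
  have hfinal : ∫ q : Zsp d × Zsp d,
        2 ^ (p - 1) * (dPmet p 0 q.2 ^ p + dPmet p q.1 q.2 ^ p) ∂π
      = 2 ^ (p - 1) * ((∫ q : Zsp d × Zsp d, dPmet p 0 q.2 ^ p ∂π)
        + ∫ q : Zsp d × Zsp d, dPmet p q.1 q.2 ^ p ∂π) := by
    rw [integral_const_mul, integral_add i2 hint]
  have h2p : (0:ℝ) ≤ 2 ^ (p - 1) := Real.rpow_nonneg (by norm_num) _
  rw [e1, e2]
  calc ∫ q : Zsp d × Zsp d, dPmet p 0 q.1 ^ p ∂π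
      ≤ 2 ^ (p - 1) * ((∫ q : Zsp d × Zsp d, dPmet p 0 q.2 ^ p ∂π)
        + ∫ q : Zsp d × Zsp d, dPmet p q.1 q.2 ^ p ∂π) := key.trans_eq hfinal
    _ ≤ 2 ^ (p - 1) * ((∫ q : Zsp d × Zsp d, dPmet p 0 q.2 ^ p ∂π) + 4) := by
        have := hval2
        nlinarith

end Aux

/-- A sequence in `P_p(ℝ^{d+1})` that is Cauchy w.r.t. `D_p` is tight. -/
theorem Dp_cauchy_tight {d : ℕ} (hd : 1 ≤ d) (p : ℝ) (hp : 1 ≤ p)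
    (μ : ℕ → Measure (Zsp d)) (hμ : ∀ k, MemPp p (μ k))
    (hcauchy : ∀ ε : ℝ, 0 < ε → ∃ N : ℕ, ∀ j ≥ N, ∀ k ≥ N, Dp p (μ j) (μ k) < ε) :
    ∀ ε : ℝ, 0 < ε → ∃ K : Set (Zsp d), IsCompact K ∧
      ∀ k : ℕ, 1 - ENNReal.ofReal ε ≤ μ k K := by
  intro ε hε
  have hp0 : (0:ℝ) < p := lt_of_lt_of_le one_pos hp
  obtain ⟨N, hN⟩ := hcauchy 1 one_pos
  set m : ℕ → ℝ := fun k => ∫ z, dPmet p 0 z ^ p ∂(μ k) with hm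
  have hboundN : ∀ j, N ≤ j → m j ≤ 2 ^ (p - 1) * (m N + 4) := fun j hj =>
    moment_bound hp (hμ j) (hμ N) (hN j hj N le_rfl)
  set M : ℝ := max (max ((Finset.range (N+1)).sup' ⟨N, Finset.self_mem_range_succ N⟩ m)
    (2 ^ (p - 1) * (m N + 4))) 1 with hM
  have hM1 : (1:ℝ) ≤ M := le_max_right _ _
  have hMpos : (0:ℝ) < M := lt_of_lt_of_le one_pos hM1
  have hmM : ∀ k, m k ≤ M := by
    intro k
    rcases le_or_gt k N with h | h
    · exact le_trans (Finset.le_sup' m (Finset.mem_range_succ_iff.mpr h))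
        (le_trans (le_max_left _ _) (le_max_left _ _))
    · exact le_trans (hboundN k h.le) (le_trans (le_max_right _ _) (le_max_left _ _))
  set t : ℝ := M / ε with ht
  have ht0 : 0 < t := div_pos hMpos hε
  set R : ℝ := t ^ (1/p) with hR
  have hR0 : 0 ≤ R := Real.rpow_nonneg ht0.le _
  refine ⟨Metric.closedBall (0 : Zsp d) R, isCompact_closedBall _ _, fun k => ?_⟩
  haveI := (hμ k).1
  have hsub : (Metric.closedBall (0 : Zsp d) R)ᶜ ⊆ {z : Zsp d | t ≤ dPmet p 0 z ^ p} := by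
    intro z hz
    by_contra hcon
    have hflt : dPmet p 0 z ^ p < t := lt_of_not_ge hcon
    apply hz
    rw [Metric.mem_closedBall]
    rw [dPmet_rpow hp0] at hflt
    simp only [Prod.fst_zero, Prod.snd_zero, Pi.zero_apply, zero_sub, abs_neg] at hflt
    have hsum_nonneg : 0 ≤ ∑ i, |z.1 i| ^ p :=
      Finset.sum_nonneg fun i _ => Real.rpow_nonneg (abs_nonneg _) _
    have hlast_nonneg : 0 ≤ |z.2| ^ p := Real.rpow_nonneg (abs_nonneg _) _
    have hcoord : ∀ x : ℝ, |x| ^ p ≤ t → |x| ≤ R := by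
      intro x hx
      have h1 : |x| = (|x| ^ p) ^ (1/p) := by
        rw [← Real.rpow_mul (abs_nonneg x), mul_one_div, div_self hp0.ne', Real.rpow_one]
      rw [h1, hR]
      exact Real.rpow_le_rpow (Real.rpow_nonneg (abs_nonneg _) _) hx (by positivity)
    have hdist1 : dist z.1 (0 : Fin d → ℝ) ≤ R := by
      rw [dist_pi_le_iff hR0]
      intro i
      have hterm : |z.1 i| ^ p ≤ t := by
        have h1 : |z.1 i| ^ p ≤ ∑ j, |z.1 j| ^ p :=
          Finset.single_le_sum (fun j _ => Real.rpow_nonneg (abs_nonneg _) _)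
            (Finset.mem_univ i)
        linarith
      have h2 := hcoord _ hterm
      rw [Real.dist_eq, Pi.zero_apply, sub_zero]
      exact h2
    have hdist2 : dist z.2 (0 : ℝ) ≤ R := by
      have hterm : |z.2| ^ p ≤ t := by linarith
      have h2 := hcoord _ hterm
      rw [Real.dist_eq, sub_zero]
      exact h2
    rw [Prod.dist_eq]
    exact max_le hdist1 hdist2
  have hnn : 0 ≤ᵐ[μ k] fun z : Zsp d => dPmet p 0 z ^ p :=
    ae_of_all _ fun z => Real.rpow_nonneg (dPmet_nonneg _ _ _) _
  have hintk := (hμ k).2 0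
  have hmar := mul_meas_ge_le_integral_of_nonneg hnn hintk t
  have hne : μ k {z : Zsp d | t ≤ dPmet p 0 z ^ p} ≠ ⊤ := measure_ne_top _ _
  have htr : (μ k {z : Zsp d | t ≤ dPmet p 0 z ^ p}).toReal ≤ ε := by
    have h1 : t * (μ k {z : Zsp d | t ≤ dPmet p 0 z ^ p}).toReal ≤ M :=
      le_trans hmar (hmM k)
    have h2 : (μ k {z : Zsp d | t ≤ dPmet p 0 z ^ p}).toReal ≤ M / t := by
      rw [le_div_iff₀ ht0]; linarith
    have h3 : M / t = ε := by
      rw [ht]; field_simp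
    linarith
  have hcompl : μ k (Metric.closedBall (0:Zsp d) R)ᶜ ≤ ENNReal.ofReal ε := by
    refine le_trans (measure_mono hsub) ?_
    rw [← ENNReal.ofReal_toReal hne]
    exact ENNReal.ofReal_le_ofReal htr
  have hK : μ k (Metric.closedBall (0:Zsp d) R) + μ k (Metric.closedBall (0:Zsp d) R)ᶜ
      = 1 := by
    rw [measure_add_measure_compl measurableSet_closedBall, measure_univ]
  rw [tsub_le_iff_right]
  calc (1:ENNReal) = μ k (Metric.closedBall (0:Zsp d) R)
      + μ k (Metric.closedBall (0:Zsp d) R)ᶜ := hK.symm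
    _ ≤ μ k (Metric.closedBall (0:Zsp d) R) + ENNReal.ofReal ε :=
      add_le_add le_rfl hcompl
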